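/- A linear operator Φ on π₃ is a local automorphism of π₃ if and only if there exist complex numbers b₁₁, b₂₁, b₃₁, b₃₂, b₃₄, b₅₁, b₅₄ with b₁₁ ≠ 0 and a sign ε ∈ {1,−1} such that the matrix of Φ is [[b₁₁,0,0,0,0],[b₂₁,b₁₁²,0,0,0],[b₃₁,b₃₂,ε·b₁₁³,b₃₄,0],[0,0,0,b₁₁,0],[b₅₁,0,0,b₅₄,b₁₁²]]. -/

import Mathlib

noncomputable section

/-- The multiplication of the 5-dimensional naturally graded nilpotent associative
algebra `π₃`, given on the basis `e₁, …, e₅` (indices `0, …, 4`) by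
`e₁e₁ = e₂`, `e₁e₂ = e₂e₁ = e₃`, `e₁e₄ = e₅`, `e₄e₄ = e₅`. -/
def pi3Mul (x y : Fin 5 → ℂ) : Fin 5 → ℂ :=
  ![0, x 0 * y 0, x 0 * y 1 + x 1 * y 0, 0, x 0 * y 3 + x 3 * y 3]

/-- An automorphism of `π₃`: a bijective linear operator respecting the multiplication. -/
def IsPi3Aut (Φ : (Fin 5 → ℂ) →ₗ[ℂ] (Fin 5 → ℂ)) : Prop :=
  Function.Bijective Φ ∧ ∀ x y, Φ (pi3Mul x y) = pi3Mul (Φ x) (Φ y)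

/-- A local automorphism of `π₃`: a linear operator that agrees at every point with
some automorphism (depending on the point). -/
def IsPi3LocAut (Φ : (Fin 5 → ℂ) →ₗ[ℂ] (Fin 5 → ℂ)) : Prop :=
  ∀ x : Fin 5 → ℂ, ∃ ψ : (Fin 5 → ℂ) →ₗ[ℂ] (Fin 5 → ℂ), IsPi3Aut ψ ∧ Φ x = ψ x

/-!
An automorphism of `π₃` is determined by the images `u` of `e₁` and `v` of `e₄`, which generate
the algebra; the relations `e₄e₁ = e₂e₄ = 0` and `e₁e₄ = e₄e₄`, with bijectivity, force
`u₄ = v₁ = v₂ = 0` and `v₄ = u₁ ≠ 0`, which gives the matrix of `pi3AutMap`. A local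
automorphism agrees with such maps at each `eⱼ` and at the sums `e₁ + e₄`, `e₂ + e₄`, `e₂ + e₅`,
`e₃ + e₅`; comparing coordinates gives the diagonal `b₁₁, b₁₁², c³, b₁₁, b₁₁²` with only
`c² = b₁₁²` known, whence the sign `ε`. Conversely, at `x` with `x₁ ≠ 0` (resp. `x₄ ≠ 0`) the
free entry `(3, 1)` (resp. `(3, 4)`) of an automorphism matrix absorbs the discrepancy in the
third coordinate, and at the remaining `x` the automorphism with `a = ε b₁₁` works.
-/

open scoped Matrix

def pi3AutMap (a u₁ u₂ u₄ v₂ v₄ : ℂ) : (Fin 5 → ℂ) →ₗ[ℂ] (Fin 5 → ℂ) :=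
  Matrix.toLin' !![a, 0, 0, 0, 0;
                   u₁, a ^ 2, 0, 0, 0;
                   u₂, 2 * a * u₁, a ^ 3, v₂, 0;
                   0, 0, 0, a, 0;
                   u₄, 0, 0, v₄, a ^ 2]

@[simp]
theorem pi3AutMap_apply (a u₁ u₂ u₄ v₂ v₄ : ℂ) (x : Fin 5 → ℂ) :
    pi3AutMap a u₁ u₂ u₄ v₂ v₄ x =
      ![a * x 0,
        u₁ * x 0 + a ^ 2 * x 1,
        u₂ * x 0 + 2 * a * u₁ * x 1 + a ^ 3 * x 2 + v₂ * x 3,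
        a * x 3,
        u₄ * x 0 + v₄ * x 3 + a ^ 2 * x 4] := by
  ext i
  fin_cases i <;> simp [pi3AutMap, Matrix.mulVec, dotProduct, Fin.sum_univ_five]

theorem isPi3Aut_pi3AutMap {a : ℂ} (ha : a ≠ 0) (u₁ u₂ u₄ v₂ v₄ : ℂ) :
    IsPi3Aut (pi3AutMap a u₁ u₂ u₄ v₂ v₄) := by
  have hinj : Function.Injective (pi3AutMap a u₁ u₂ u₄ v₂ v₄) := by
    rw [injective_iff_map_eq_zero]
    intro x hx
    simp only [pi3AutMap_apply, funext_iff, Pi.zero_apply, Fin.forall_fin_succ,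
      Matrix.cons_val_zero, Matrix.cons_val_succ, Matrix.cons_val_fin_one, mul_eq_zero, ha, false_or, forall_const] at hx
    obtain ⟨h₀, h₁, h₂, h₃, h₄⟩ := hx
    ext i; fin_cases i <;> simp_all
  refine ⟨⟨hinj, LinearMap.injective_iff_surjective.mp hinj⟩, fun x y => ?_⟩
  ext i
  fin_cases i <;> simp [pi3Mul] <;> ring

theorem IsPi3Aut.exists_eq_pi3AutMap {ψ : (Fin 5 → ℂ) →ₗ[ℂ] (Fin 5 → ℂ)} (hψ : IsPi3Aut ψ) :
    ∃ a u₁ u₂ u₄ v₂ v₄, a ≠ 0 ∧ ψ = pi3AutMap a u₁ u₂ u₄ v₂ v₄ := by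
  obtain ⟨hbij, hmul⟩ := hψ
  let e : Fin 5 → Fin 5 → ℂ := fun i => Pi.single i 1
  have table : pi3Mul (e 0) (e 0) = e 1 ∧ pi3Mul (e 0) (e 1) = e 2 ∧ pi3Mul (e 0) (e 3) = e 4 ∧
      pi3Mul (e 3) (e 3) = e 4 ∧ pi3Mul (e 1) (e 3) = 0 ∧ pi3Mul (e 3) (e 0) = 0 := by
    refine ⟨?_, ?_, ?_, ?_, ?_, ?_⟩ <;> ext i <;> fin_cases i <;> simp [e, pi3Mul]
  obtain ⟨m00, m01, m03, m33, m13, m30⟩ := table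
  set u := ψ (e 0)
  set v := ψ (e 3)
  have ψ₁ : ψ (e 1) = pi3Mul u u := by rw [← m00, hmul]
  have ψ₂ : ψ (e 2) = pi3Mul u (pi3Mul u u) := by rw [← m01, hmul, ψ₁]
  have ψ₄ : ψ (e 4) = pi3Mul v v := by rw [← m33, hmul]
  have huv : pi3Mul u v = pi3Mul v v := by rw [← hmul, ← hmul, m03, m33]
  have huuv : pi3Mul (pi3Mul u u) v = 0 := by rw [← ψ₁, ← hmul, m13, map_zero]
  have hvu : pi3Mul v u = 0 := by rw [← hmul, m30, map_zero]
  have hne : ∀ i, ψ (e i) ≠ 0 := fun i h => one_ne_zero (α := ℂ) <| by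
    simpa [e] using congrFun (hbij.injective (h.trans (map_zero ψ).symm)) i
  have hu₀ : u 0 ≠ 0 := fun h => hne 2 (by ext i; fin_cases i <;> simp [ψ₂, pi3Mul, h])
  have hv₀ : v 0 = 0 := by simpa [pi3Mul, hu₀] using congrFun huuv 2
  have hv₁ : v 1 = 0 := by simpa [pi3Mul, hv₀, hu₀] using congrFun hvu 2
  have hv₃ : v 3 ≠ 0 := fun h => hne 4 (by ext i; fin_cases i <;> simp [ψ₄, pi3Mul, h, hv₀])
  have hu₃ : u 3 = 0 := by simpa [pi3Mul, hv₀, hv₃] using congrFun hvu 4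
  have hv₃u₀ : v 3 = u 0 := by simpa [pi3Mul, hv₀, hu₃, hv₃, eq_comm] using congrFun huv 4
  refine ⟨u 0, u 1, u 2, u 4, v 2, v 4, hu₀, (Pi.basisFun ℂ (Fin 5)).ext fun i => ?_⟩
  fin_cases i
  all_goals
    ext k
    fin_cases k <;> simp [u, v, e, ψ₁, ψ₂, ψ₄, pi3Mul, hu₃, hv₀, hv₁, hv₃u₀] <;> ring

theorem isPi3Aut_iff {ψ : (Fin 5 → ℂ) →ₗ[ℂ] (Fin 5 → ℂ)} :
    IsPi3Aut ψ ↔ ∃ a u₁ u₂ u₄ v₂ v₄, a ≠ 0 ∧ ψ = pi3AutMap a u₁ u₂ u₄ v₂ v₄ :=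
  ⟨IsPi3Aut.exists_eq_pi3AutMap,
    fun ⟨_, _, _, _, _, _, ha, hψ⟩ => hψ ▸ isPi3Aut_pi3AutMap ha _ _ _ _ _⟩

theorem isPi3LocAut_iff {Φ : (Fin 5 → ℂ) →ₗ[ℂ] (Fin 5 → ℂ)} :
    IsPi3LocAut Φ ↔
      ∀ x, ∃ a u₁ u₂ u₄ v₂ v₄, a ≠ 0 ∧ Φ x = pi3AutMap a u₁ u₂ u₄ v₂ v₄ x := by
  simp [IsPi3LocAut, isPi3Aut_iff]

def pi3LocAutMatrix (b₁₁ b₂₁ b₃₁ b₃₂ b₃₄ b₅₁ b₅₄ ε : ℂ) : Matrix (Fin 5) (Fin 5) ℂ :=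
  !![b₁₁, 0, 0, 0, 0;
     b₂₁, b₁₁ ^ 2, 0, 0, 0;
     b₃₁, b₃₂, ε * b₁₁ ^ 3, b₃₄, 0;
     0, 0, 0, b₁₁, 0;
     b₅₁, 0, 0, b₅₄, b₁₁ ^ 2]

theorem IsPi3LocAut.exists_toMatrix'_eq {Φ : (Fin 5 → ℂ) →ₗ[ℂ] (Fin 5 → ℂ)} (h : IsPi3LocAut Φ) :
    ∃ b₁₁ b₂₁ b₃₁ b₃₂ b₃₄ b₅₁ b₅₄ ε, b₁₁ ≠ 0 ∧ ε ^ 2 = 1 ∧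
      LinearMap.toMatrix' Φ = pi3LocAutMatrix b₁₁ b₂₁ b₃₁ b₃₂ b₃₄ b₅₁ b₅₄ ε := by
  rw [isPi3LocAut_iff] at h
  obtain ⟨a, u₁, u₂, u₄, _, _, ha, hΦ₀⟩ := h (Pi.single 0 1)
  obtain ⟨b, w₁, _, _, _, _, _, hΦ₁⟩ := h (Pi.single 1 1)
  obtain ⟨c, _, _, _, _, _, _, hΦ₂⟩ := h (Pi.single 2 1)
  obtain ⟨d, _, _, _, v₂, v₄, _, hΦ₃⟩ := h (Pi.single 3 1)
  obtain ⟨f, _, _, _, _, _, _, hΦ₄⟩ := h (Pi.single 4 1)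
  obtain ⟨g, _, _, _, _, _, _, hΦ₀₃⟩ := h (Pi.single 0 1 + Pi.single 3 1)
  obtain ⟨k, _, _, _, _, _, _, hΦ₁₃⟩ := h (Pi.single 1 1 + Pi.single 3 1)
  obtain ⟨l, _, _, _, _, _, _, hΦ₁₄⟩ := h (Pi.single 1 1 + Pi.single 4 1)
  obtain ⟨m, _, _, _, _, _, _, hΦ₂₄⟩ := h (Pi.single 2 1 + Pi.single 4 1)
  simp only [map_add, hΦ₀, hΦ₁, hΦ₂, hΦ₃, hΦ₄, pi3AutMap_apply, Pi.single_eq_same,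
    Pi.single_eq_of_ne, ne_eq, Fin.reduceEq, not_false_eq_true, mul_one, mul_zero, add_zero,
    zero_add, Matrix.add_cons, Matrix.head_cons, Matrix.tail_cons, Matrix.empty_add_empty,
    funext_iff, Fin.forall_fin_succ, Matrix.cons_val_zero, Matrix.cons_val_succ,
    Matrix.cons_val_fin_one, forall_const, zero_ne_one, one_ne_zero, true_and]
    at hΦ₀₃ hΦ₁₃ hΦ₁₄ hΦ₂₄
  obtain ⟨hag, -, -, hdg, -⟩ := hΦ₀₃
  obtain ⟨hbk, -, hdk, -⟩ := hΦ₁₃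
  obtain ⟨hbl, -, hfl⟩ := hΦ₁₄
  obtain ⟨hcm, hfm⟩ := hΦ₂₄
  have hda : d = a := hdg.trans hag.symm
  have hba : b ^ 2 = a ^ 2 := by rw [hbk, ← hdk, hda]
  have hfa : f ^ 2 = a ^ 2 := by rw [hfl, ← hbl, hba]
  have hma : m ^ 2 = a ^ 2 := by rw [← hfm, hfa]
  refine ⟨a, u₁, u₂, 2 * b * w₁, v₂, u₄, v₄, m / a, ha,
    by rw [div_pow, hma, div_self (pow_ne_zero 2 ha)], ?_⟩
  have hc : c ^ 3 = m / a * a ^ 3 := by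
    rw [hcm, div_mul_eq_mul_div, eq_div_iff ha]
    linear_combination (m * a) * hma
  ext i j
  rw [LinearMap.toMatrix'_apply]
  fin_cases i <;> fin_cases j <;>
    simp [pi3LocAutMatrix, hΦ₀, hΦ₁, hΦ₂, hΦ₃, hΦ₄, hc, hba, hfa, hda]

@[simp]
theorem pi3LocAutMatrix_mulVec (b₁₁ b₂₁ b₃₁ b₃₂ b₃₄ b₅₁ b₅₄ ε : ℂ) (x : Fin 5 → ℂ) :
    pi3LocAutMatrix b₁₁ b₂₁ b₃₁ b₃₂ b₃₄ b₅₁ b₅₄ ε *ᵥ x =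
      ![b₁₁ * x 0,
        b₂₁ * x 0 + b₁₁ ^ 2 * x 1,
        b₃₁ * x 0 + b₃₂ * x 1 + ε * b₁₁ ^ 3 * x 2 + b₃₄ * x 3,
        b₁₁ * x 3,
        b₅₁ * x 0 + b₅₄ * x 3 + b₁₁ ^ 2 * x 4] := by
  ext i
  fin_cases i <;> simp [pi3LocAutMatrix, Matrix.mulVec, dotProduct, Fin.sum_univ_five]

theorem isPi3LocAut_toLin'_pi3LocAutMatrix {b₁₁ ε : ℂ} (hb : b₁₁ ≠ 0) (hε : ε ^ 2 = 1)
    (b₂₁ b₃₁ b₃₂ b₃₄ b₅₁ b₅₄ : ℂ) :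
    IsPi3LocAut (Matrix.toLin' (pi3LocAutMatrix b₁₁ b₂₁ b₃₁ b₃₂ b₃₄ b₅₁ b₅₄ ε)) := by
  rw [isPi3LocAut_iff]
  intro x
  have hε₀ : ε ≠ 0 := by rintro rfl; norm_num at hε
  set δ := (b₃₂ - 2 * b₁₁ * b₂₁) * x 1 + (ε - 1) * b₁₁ ^ 3 * x 2
  by_cases hx₀ : x 0 = 0
  · by_cases hx₃ : x 3 = 0
    · refine ⟨ε * b₁₁, b₃₂ / (2 * ε * b₁₁), 0, 0, 0, 0, mul_ne_zero hε₀ hb, ?_⟩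
      have hsq : (ε * b₁₁) ^ 2 = b₁₁ ^ 2 := by rw [mul_pow, hε, one_mul]
      have hcube : (ε * b₁₁) ^ 3 = ε * b₁₁ ^ 3 := by linear_combination ε * b₁₁ ^ 3 * hε
      have hu₁ : 2 * (ε * b₁₁) * (b₃₂ / (2 * ε * b₁₁)) = b₃₂ := by field_simp
      ext i; fin_cases i <;> simp [hx₀, hx₃, hsq, hcube, hu₁]
    · refine ⟨b₁₁, b₂₁, b₃₁, b₅₁, b₃₄ + δ / x 3, b₅₄, hb, ?_⟩
      ext i; fin_cases i <;> simp [δ]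
      field_simp; ring
  · refine ⟨b₁₁, b₂₁, b₃₁ + δ / x 0, b₅₁, b₃₄, b₅₄, hb, ?_⟩
    ext i; fin_cases i <;> simp [δ]
    field_simp; ring

theorem pi3_locAut_iff (Φ : (Fin 5 → ℂ) →ₗ[ℂ] (Fin 5 → ℂ)) :
    IsPi3LocAut Φ ↔
      ∃ b11 b21 b31 b32 b34 b51 b54 ε : ℂ, b11 ≠ 0 ∧ (ε = 1 ∨ ε = -1) ∧
        LinearMap.toMatrix' Φ =
          !![b11, 0, 0, 0, 0;
             b21, b11 ^ 2, 0, 0, 0;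
             b31, b32, ε * b11 ^ 3, b34, 0;
             0, 0, 0, b11, 0;
             b51, 0, 0, b54, b11 ^ 2] := by
  constructor
  · intro h
    obtain ⟨b₁₁, b₂₁, b₃₁, b₃₂, b₃₄, b₅₁, b₅₄, ε, hb, hε, hΦ⟩ := h.exists_toMatrix'_eq
    exact ⟨b₁₁, b₂₁, b₃₁, b₃₂, b₃₄, b₅₁, b₅₄, ε, hb, sq_eq_one_iff.mp hε, hΦ⟩
  · rintro ⟨b₁₁, b₂₁, b₃₁, b₃₂, b₃₄, b₅₁, b₅₄, ε, hb, hε, hΦ⟩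
    rw [← Matrix.toLin'_toMatrix' Φ, hΦ]
    exact isPi3LocAut_toLin'_pi3LocAutMatrix hb (sq_eq_one_iff.mpr hε) _ _ _ _ _ _
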